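/- arXiv:1901.07784 — 2 statements merged into one kernel-verified Lean document; each statement's English description precedes it below -/
import Mathlib

section
/- Let m ≥ 3 and let x be a vertex of the Hamming graph H(n,m). The restriction map from the vertex stabilizer G_x (in the full automorphism group G of H(n,m)) to the automorphism group of the induced subgraph on N(x), given by f ↦ f|_{N(x)}, is an injective group homomorphism. -/
/-- The Hamming graph `H(n,m)`: vertices are `n`-tuples over `Fin m`,
adjacent iff they differ in exactly one coordinate. -/
def hammingGraph (n m : ℕ) : SimpleGraph (Fin n → Fin m) where
  Adj x y := hammingDist x y = 1
  symm := by constructor; intro x y h; rwa [hammingDist_comm]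
  loopless := by constructor; intro x h; simp [hammingDist_self] at h

instance graphAutGroup {V : Type*} (G : SimpleGraph V) : Group (G ≃g G) where
  mul a b := b.trans a
  one := SimpleGraph.Iso.refl
  inv := SimpleGraph.Iso.symm
  mul_assoc a b c := rfl
  one_mul a := RelIso.ext fun _ => rfl
  mul_one a := RelIso.ext fun _ => rfl
  inv_mul_cancel a := RelIso.ext fun x => a.symm_apply_apply x


/-- The stabilizer of the vertex `x` in `Aut(H(n,m))`. -/
def hammingStab (n m : ℕ) (x : Fin n → Fin m) :
    Subgroup (hammingGraph n m ≃g hammingGraph n m) where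
  carrier := {f | f x = x}
  one_mem' := rfl
  mul_mem' := by
    intro a b ha hb
    show a (b x) = x
    rw [hb, ha]
  inv_mem' := by
    intro a ha
    show a.symm x = x
    conv_lhs => rw [← ha]
    exact a.symm_apply_apply x

/-! An automorphism `f` fixing `x` and every neighbour of `x` fixes every vertex, by induction on the
distance `d + 2` from `x`. Such a vertex `y` differs from `x` in two coordinates `i ≠ j`; correcting
one of them gives neighbours `zi`, `zj` of `y` at distance `d + 1`, and correcting both gives `w` at
distance `d`. All three are fixed, and `y`, `w` are the only common neighbours of `zi` and `zj`, so
`f y = y`. Hence the restriction to `N(x)` has trivial kernel. -/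

open Function

section hammingDist

variable {ι : Type*} [Fintype ι] {β : ι → Type*} [∀ i, DecidableEq (β i)]

theorem hammingDist_eq_one_iff {x y : ∀ i, β i} :
    hammingDist x y = 1 ↔ ∃ k, ∀ t, x t ≠ y t ↔ t = k := by
  simp [hammingDist, Finset.card_eq_one, Finset.ext_iff]

theorem exists_ne_ne_of_two_le_hammingDist {x y : ∀ i, β i} (h : 2 ≤ hammingDist x y) :
    ∃ i j, i ≠ j ∧ x i ≠ y i ∧ x j ≠ y j := by
  obtain ⟨i, hi, j, hj, hij⟩ := Finset.one_lt_card.1 h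
  exact ⟨i, j, hij, by simpa using hi, by simpa using hj⟩

variable [DecidableEq ι]

theorem hammingDist_update_eq_one {y : ∀ i, β i} {i : ι} {p : β i} (hp : p ≠ y i) :
    hammingDist (update y i p) y = 1 :=
  hammingDist_eq_one_iff.2 ⟨i, fun t => by rcases eq_or_ne t i with rfl | ht <;> simp_all⟩

theorem hammingDist_update_add_one {x y : ∀ i, β i} {i : ι} (hi : x i ≠ y i) :
    hammingDist x (update y i (x i)) + 1 = hammingDist x y := by
  have : (Finset.univ.filter fun t => x t ≠ update y i (x i) t) =
      (Finset.univ.filter fun t => x t ≠ y t).erase i := by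
    ext t; rcases eq_or_ne t i with rfl | ht <;> simp [*]
  rw [hammingDist, this, Finset.card_erase_add_one (by simpa using hi), hammingDist]

theorem eq_or_eq_of_hammingDist_update_eq_one {y u : ∀ i, β i} {i j : ι} (hij : i ≠ j)
    {p : β i} {q : β j} (hp : p ≠ y i) (hq : q ≠ y j)
    (hu : hammingDist (update y i p) u = 1) (hv : hammingDist (update y j q) u = 1) :
    u = y ∨ u = update (update y i p) j q := by
  obtain ⟨k, hk⟩ := hammingDist_eq_one_iff.1 hu
  obtain ⟨l, hl⟩ := hammingDist_eq_one_iff.1 hv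
  have hk' : ∀ t ≠ k, u t = update y i p t := fun t ht => (not_not.1 ((hk t).not.2 ht)).symm
  have hl' : ∀ t ≠ l, u t = update y j q t := fun t ht => (not_not.1 ((hl t).not.2 ht)).symm
  have hi : i = k ∨ i = l := by
    by_contra! h
    have := (hk' i h.1).symm.trans (hl' i h.2)
    simp [update_of_ne hij] at this
    exact hp this
  have hj : j = k ∨ j = l := by
    by_contra! h
    have := (hk' j h.1).symm.trans (hl' j h.2)
    simp [update_of_ne hij.symm] at this
    exact hq this.symm
  rcases hi with rfl | rfl <;> rcases hj with rfl | rfl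
  · exact absurd rfl hij
  · left
    funext t
    rcases eq_or_ne t i with rfl | hti
    · simpa [update_of_ne hij] using hl' t hij
    · simpa [update_of_ne hti] using hk' t hti
  · right
    funext t
    rcases eq_or_ne t i with rfl | hti
    · simpa [update_of_ne hij] using hk' t hij
    rcases eq_or_ne t j with rfl | htj
    · simpa [update_of_ne hij] using hl' t hti
    · simpa [update_of_ne hti, update_of_ne htj] using hk' t htj
  · exact absurd rfl hij

end hammingDist

theorem hammingGraph_aut_apply_eq_self {n m : ℕ} (f : hammingGraph n m ≃g hammingGraph n m)
    {x : Fin n → Fin m} (hx : f x = x) (hN : ∀ y, (hammingGraph n m).Adj x y → f y = y)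
    (y : Fin n → Fin m) : f y = y := by
  induction hd : hammingDist x y using Nat.strong_induction_on generalizing y with
  | _ d ih =>
  rcases d with _ | _ | d
  · rw [← hammingDist_eq_zero.1 hd, hx]
  · exact hN y hd
  obtain ⟨i, j, hij, hi, hj⟩ := exists_ne_ne_of_two_le_hammingDist (x := x) (y := y) (by omega)
  set zi := update y i (x i)
  set zj := update y j (x j)
  set w := update zi j (x j)
  have hdi : hammingDist x zi + 1 = d + 2 := hd ▸ hammingDist_update_add_one hi
  have hdj : hammingDist x zj + 1 = d + 2 := hd ▸ hammingDist_update_add_one hj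
  have hdw : hammingDist x w + 1 = hammingDist x zi :=
    hammingDist_update_add_one (by simpa [zi, update_of_ne hij.symm] using hj)
  have fzi : f zi = zi := ih (d + 1) (by omega) zi (by omega)
  have fzj : f zj = zj := ih (d + 1) (by omega) zj (by omega)
  have fw : f w = w := ih d (by omega) w (by omega)
  have hadj_i : (hammingGraph n m).Adj zi (f y) := by
    rw [← fzi, f.map_adj_iff]
    exact hammingDist_update_eq_one hi
  have hadj_j : (hammingGraph n m).Adj zj (f y) := by
    rw [← fzj, f.map_adj_iff]
    exact hammingDist_update_eq_one hj
  refine (eq_or_eq_of_hammingDist_update_eq_one hij hi hj hadj_i hadj_j).resolve_right fun hyw => ?_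
  have : y = w := f.injective (hyw.trans fw.symm)
  exact hj (by simpa [w] using (congrFun this j).symm)

namespace SimpleGraph

variable {V : Type*} {G : SimpleGraph V}

def Iso.restrictNeighborSet (f : G ≃g G) {x : V} (hx : f x = x) :
    G.induce (G.neighborSet x) ≃g G.induce (G.neighborSet x) :=
  f.induce <| f.toEquiv.bijOn fun y => by
    rw [mem_neighborSet, mem_neighborSet]
    conv_lhs => rw [← hx]
    exact f.map_adj_iff

def restrictNeighborSetHom (S : Subgroup (G ≃g G)) {x : V} (hS : ∀ f ∈ S, f x = x) :
    S →* (G.induce (G.neighborSet x) ≃g G.induce (G.neighborSet x)) where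
  toFun f := f.1.restrictNeighborSet (hS f f.2)
  map_one' := rfl
  map_mul' _ _ := rfl

end SimpleGraph

theorem hammingGraph_stabilizer_restriction_general (n m : ℕ)
    (x : Fin n → Fin m) :
    ∃ φ : hammingStab n m x →*
        ((hammingGraph n m).induce ((hammingGraph n m).neighborSet x) ≃g
         (hammingGraph n m).induce ((hammingGraph n m).neighborSet x)),
      Function.Injective φ ∧
      ∀ (f : hammingStab n m x)
        (y : (hammingGraph n m).neighborSet x),
          ((φ f) y : Fin n → Fin m) = (f : hammingGraph n m ≃g hammingGraph n m) y := by
  refine ⟨SimpleGraph.restrictNeighborSetHom (hammingStab n m x) fun f hf => hf,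
    (injective_iff_map_eq_one _).2 fun f hf => ?_, fun f y => rfl⟩
  refine Subtype.ext (RelIso.ext fun y => ?_)
  exact hammingGraph_aut_apply_eq_self f.1 f.2
    (fun y hy => congrArg (fun ψ => (ψ ⟨y, hy⟩ : Fin n → Fin m)) hf) y

/-- For `m ≥ 3`, the stabilizer of a vertex `x` in `Aut(H(n,m))` embeds, via
restriction to `N(x)`, into the automorphism group of the induced subgraph on
`N(x)`: the restriction map is an injective group homomorphism. -/
theorem hammingGraph_stabilizer_restriction (n m : ℕ) (hm : 3 ≤ m)
    (x : Fin n → Fin m) :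
    ∃ φ : hammingStab n m x →*
        ((hammingGraph n m).induce ((hammingGraph n m).neighborSet x) ≃g
         (hammingGraph n m).induce ((hammingGraph n m).neighborSet x)),
      Function.Injective φ ∧
      ∀ (f : hammingStab n m x)
        (y : (hammingGraph n m).neighborSet x),
          ((φ f) y : Fin n → Fin m) = (f : hammingGraph n m ≃g hammingGraph n m) y :=
  hammingGraph_stabilizer_restriction_general n m x
end

section
/- For n ≥ 2 and m ≥ 3, the automorphism group of the Hamming graph H(n,m) is isomorphic to the wreath product Sym(Fin m) wr Sym(Fin n), i.e., to the semidirect product (Sym(Fin m))^n ⋊ Sym(Fin n) where Sym(Fin n) permutes the coordinates. -/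
/-- The action of `Sym(ι)` on `ι`-indexed direct powers of a group `K`,
permuting the coordinates. -/
def permuteCoords {ι : Type*} {K : Type*} [Group K] : Equiv.Perm ι →* MulAut (ι → K) where
  toFun σ :=
    { Equiv.piCongrLeft' (fun _ => K) σ with
      map_mul' := fun f g => rfl }
  map_one' := by ext f i; rfl
  map_mul' σ τ := by ext f i; rfl


/-!
An automorphism `φ` of `H(n,m)` sends all edges from `x` along the line `{update x i a | a}` to
edges in one direction `τₓ i`: two such edges lie in a triangle, and the edges of a triangle of
`H(n,m)` share their direction. `τₓ` is injective, because neighbours of `x` in two different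
directions are at distance two, and it is independent of `x`: for an edge `x y` in direction
`k ≠ i`, the square `x, y, update y i a, update x i a` forces `τₓ i = τ_y i`. Hence coordinate
`τ i` of `φ x` depends only on coordinate `i` of `x`, which writes `φ` as an element of the
wreath product.
-/

open Finset Function Equiv

namespace HammingGraph

section DiffSet

variable {ι α : Type*} [Fintype ι] [DecidableEq α] {x y z : ι → α} {i j : ι}

def diffSet (x y : ι → α) : Finset ι := {i | x i ≠ y i}

@[simp]
lemma mem_diffSet : i ∈ diffSet x y ↔ x i ≠ y i := by
  simp [diffSet]

lemma card_diffSet : #(diffSet x y) = hammingDist x y := rfl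

lemma diffSet_comm (x y : ι → α) : diffSet x y = diffSet y x := by
  ext i
  simp [ne_comm]

lemma apply_ne_of_diffSet_eq_singleton (h : diffSet x y = {i}) : x i ≠ y i :=
  mem_diffSet.1 (h ▸ mem_singleton_self i)

lemma apply_eq_of_diffSet_eq_singleton (h : diffSet x y = {i}) (hj : j ≠ i) : x j = y j := by
  by_contra hne
  exact hj (mem_singleton.1 (h ▸ mem_diffSet.2 hne))

variable [DecidableEq ι] {a b : α}

lemma diffSet_subset_union (x y z : ι → α) : diffSet x z ⊆ diffSet x y ∪ diffSet y z := by
  intro i hi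
  rw [mem_union, mem_diffSet, mem_diffSet]
  by_contra! h
  exact mem_diffSet.1 hi (h.1.trans h.2)

lemma diffSet_subset_pair (hxy : diffSet x y = {i}) (hyz : diffSet y z = {j}) :
    diffSet x z ⊆ {i, j} :=
  (diffSet_subset_union x y z).trans (by rw [hxy, hyz]; rfl)

lemma diffSet_eq_pair (hxy : diffSet x y = {i}) (hyz : diffSet y z = {j}) (hij : i ≠ j) :
    diffSet x z = {i, j} := by
  refine (diffSet_subset_pair hxy hyz).antisymm (insert_subset_iff.2 ⟨?_, ?_⟩)
  · rw [mem_diffSet, ← apply_eq_of_diffSet_eq_singleton hyz hij]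
    exact apply_ne_of_diffSet_eq_singleton hxy
  · rw [singleton_subset_iff, mem_diffSet, apply_eq_of_diffSet_eq_singleton hxy hij.symm]
    exact apply_ne_of_diffSet_eq_singleton hyz

lemma hammingDist_le_one_of_diffSet_eq_singleton (hxy : diffSet x y = {i})
    (hyz : diffSet y z = {i}) : hammingDist x z ≤ 1 := by
  rw [← card_diffSet, ← card_singleton i]
  exact card_le_card (by simpa using diffSet_subset_pair hxy hyz)

lemma eq_of_diffSet_eq_singleton_of_hammingDist_le_one (hxy : diffSet x y = {i})
    (hyz : diffSet y z = {j}) (hxz : hammingDist x z ≤ 1) : i = j := by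
  by_contra hij
  rw [← card_diffSet, diffSet_eq_pair hxy hyz hij, card_pair hij] at hxz
  omega

lemma diffSet_eq_pair_of_one_lt_hammingDist (hxy : diffSet x y = {i})
    (hyz : diffSet y z = {j}) (hxz : 1 < hammingDist x z) : diffSet x z = {i, j} := by
  refine diffSet_eq_pair hxy hyz fun hij => hxz.not_ge ?_
  exact hammingDist_le_one_of_diffSet_eq_singleton hxy (hij ▸ hyz)

lemma diffSet_update_update (hab : a ≠ b) : diffSet (update x i a) (update x i b) = {i} := by
  ext j
  rcases eq_or_ne j i with rfl | hji
  · simp [hab]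
  · simp [hji]

lemma diffSet_update_right (ha : x i ≠ a) : diffSet x (update x i a) = {i} := by
  simpa using diffSet_update_update (x := x) (i := i) ha

lemma update_eq_of_diffSet_eq_singleton (h : diffSet x y = {i}) : update x i (y i) = y := by
  funext j
  rcases eq_or_ne j i with rfl | hji
  · rw [update_self]
  · rw [update_of_ne hji, apply_eq_of_diffSet_eq_singleton h hji]

lemma apply_eq_apply_of_diffSet_subset {β : Type*} (f : (ι → α) → β) (S : Finset ι)
    (hf : ∀ x, ∀ k ∈ S, ∀ a, f (update x k a) = f x) (hxy : diffSet x y ⊆ S) :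
    f x = f y := by
  have hpiecewise : ∀ s ⊆ S, f (s.piecewise y x) = f x := by
    intro s
    induction s using Finset.induction_on with
    | empty => simp
    | insert k s _ ih =>
      intro hs
      rw [piecewise_insert, hf _ k (hs (mem_insert_self k s)), ih ((subset_insert k s).trans hs)]
  have hy : (diffSet x y).piecewise y x = y := by
    funext j
    by_cases hj : j ∈ diffSet x y
    · simp [hj]
    · simpa [hj] using (mem_diffSet.not.1 hj)
  rw [← hpiecewise _ hxy, hy]

end DiffSet

section WreathAction

variable {ι α : Type*}

abbrev PermWreath (α ι : Type*) := (ι → Perm α) ⋊[permuteCoords] Perm ι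

def wreathAct (g : PermWreath α ι) (x : ι → α) : ι → α :=
  fun i => g.left i (x (g.right⁻¹ i))

lemma wreathAct_one (x : ι → α) : wreathAct 1 x = x := rfl

lemma wreathAct_mul (g h : PermWreath α ι) (x : ι → α) :
    wreathAct (g * h) x = wreathAct g (wreathAct h x) :=
  rfl

lemma eq_one_of_forall_wreathAct_eq [Nontrivial α] [DecidableEq ι] {g : PermWreath α ι}
    (h : ∀ x, wreathAct g x = x) : g = 1 := by
  have hleft : ∀ i c, g.left i c = c := fun i c => congrFun (h fun _ => c) i
  refine SemidirectProduct.ext (funext fun i => Perm.ext (hleft i)) (Perm.ext fun i => ?_)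
  change g.right i = i
  by_contra hne
  obtain ⟨a, b, hab⟩ := exists_pair_ne α
  have := congrFun (h (update (fun _ => b) i a)) (g.right i)
  simp only [wreathAct, hleft, Perm.coe_inv, symm_apply_apply, update_self,
    update_of_ne hne] at this
  exact hab this

variable [Fintype ι] [DecidableEq α]

lemma diffSet_wreathAct (g : PermWreath α ι) (x y : ι → α) :
    diffSet (wreathAct g x) (wreathAct g y) = (diffSet x y).map g.right.toEmbedding := by
  ext i
  rw [mem_map_equiv, mem_diffSet, mem_diffSet, wreathAct, wreathAct, (g.left i).injective.ne_iff]
  rfl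

lemma hammingDist_wreathAct (g : PermWreath α ι) (x y : ι → α) :
    hammingDist (wreathAct g x) (wreathAct g y) = hammingDist x y := by
  rw [← card_diffSet, diffSet_wreathAct, card_map, card_diffSet]

end WreathAction

variable {n m : ℕ} {x y : Fin n → Fin m} {i : Fin n}

lemma adj_iff_exists_diffSet_eq_singleton :
    (hammingGraph n m).Adj x y ↔ ∃ k, diffSet x y = {k} := by
  rw [← card_eq_one, card_diffSet]
  rfl

lemma hammingDist_le_one_iff_eq_or_adj :
    hammingDist x y ≤ 1 ↔ x = y ∨ (hammingGraph n m).Adj x y := by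
  rw [← hammingDist_eq_zero]
  change _ ↔ _ ∨ hammingDist x y = 1
  omega

def wreathToAut (n m : ℕ) :
    PermWreath (Fin m) (Fin n) →* (hammingGraph n m ≃g hammingGraph n m) where
  toFun g :=
    { toFun := wreathAct g
      invFun := wreathAct g⁻¹
      left_inv x := by rw [← wreathAct_mul, inv_mul_cancel, wreathAct_one]
      right_inv x := by rw [← wreathAct_mul, mul_inv_cancel, wreathAct_one]
      map_rel_iff' {x y} := by
        change hammingDist (wreathAct g x) (wreathAct g y) = 1 ↔ hammingDist x y = 1
        rw [hammingDist_wreathAct] }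
  map_one' := rfl
  map_mul' g h := RelIso.ext (wreathAct_mul g h)

lemma wreathToAut_injective [Nontrivial (Fin m)] : Injective (wreathToAut n m) :=
  (injective_iff_map_eq_one _).2 fun _ hg =>
    eq_one_of_forall_wreathAct_eq fun x => DFunLike.congr_fun hg x

section Automorphism

variable (φ : hammingGraph n m ≃g hammingGraph n m)

lemma hammingDist_map_le_one_iff : hammingDist (φ x) (φ y) ≤ 1 ↔ hammingDist x y ≤ 1 := by
  rw [hammingDist_le_one_iff_eq_or_adj, hammingDist_le_one_iff_eq_or_adj, φ.injective.eq_iff,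
    φ.map_rel_iff]

lemma exists_diffSet_map_eq_singleton (h : diffSet x y = {i}) :
    ∃ k, diffSet (φ x) (φ y) = {k} :=
  adj_iff_exists_diffSet_eq_singleton.1
    (φ.map_rel_iff.2 (adj_iff_exists_diffSet_eq_singleton.2 ⟨i, h⟩))

lemma exists_diffSet_map_update_eq_singleton (x : Fin n → Fin m) (i : Fin n) :
    ∃ k, ∀ a, x i ≠ a → diffSet (φ x) (φ (update x i a)) = {k} := by
  by_cases hline : ∃ a₀, x i ≠ a₀
  · obtain ⟨a₀, ha₀⟩ := hline
    obtain ⟨k, hk⟩ := exists_diffSet_map_eq_singleton φ (diffSet_update_right ha₀)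
    refine ⟨k, fun a ha => ?_⟩
    obtain ⟨k', hk'⟩ := exists_diffSet_map_eq_singleton φ (diffSet_update_right ha)
    rcases eq_or_ne a₀ a with rfl | hne
    · exact hk
    have hadj := φ.map_rel_iff.2 (adj_iff_exists_diffSet_eq_singleton.2
      ⟨i, diffSet_update_update (x := x) hne⟩)
    rw [hk', ← eq_of_diffSet_eq_singleton_of_hammingDist_le_one
      ((diffSet_comm _ _).trans hk) hk' hadj.le]
  · exact ⟨i, fun a ha => absurd ⟨a, ha⟩ hline⟩

noncomputable def localDir (x : Fin n → Fin m) (i : Fin n) : Fin n :=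
  (exists_diffSet_map_update_eq_singleton φ x i).choose

lemma diffSet_map_update {a : Fin m} (ha : x i ≠ a) :
    diffSet (φ x) (φ (update x i a)) = {localDir φ x i} :=
  (exists_diffSet_map_update_eq_singleton φ x i).choose_spec a ha

lemma diffSet_map_eq_singleton (h : diffSet x y = {i}) :
    diffSet (φ x) (φ y) = {localDir φ x i} := by
  rw [← update_eq_of_diffSet_eq_singleton h]
  exact diffSet_map_update φ (apply_ne_of_diffSet_eq_singleton h)

variable [Nontrivial (Fin m)]

lemma localDir_injective (x : Fin n → Fin m) : Injective (localDir φ x) := by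
  intro i k hik
  by_contra hne
  obtain ⟨a, ha⟩ := exists_ne (x i)
  obtain ⟨b, hb⟩ := exists_ne (x k)
  have hxi : diffSet (update x i a) x = {i} := by
    rw [diffSet_comm]
    exact diffSet_update_right ha.symm
  have hxk : diffSet x (update x k b) = {k} := diffSet_update_right hb.symm
  have hdist : ¬ hammingDist (update x i a) (update x k b) ≤ 1 := by
    rw [← card_diffSet, diffSet_eq_pair hxi hxk hne, card_pair hne]
    omega
  refine hdist ((hammingDist_map_le_one_iff φ).1
    (hammingDist_le_one_of_diffSet_eq_singleton (y := φ x) (i := localDir φ x i) ?_ ?_))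
  · rw [diffSet_comm]
    exact diffSet_map_update φ ha.symm
  · rw [hik]
    exact diffSet_map_update φ hb.symm

lemma localDir_update (x : Fin n → Fin m) (k : Fin n) (b : Fin m) :
    localDir φ (update x k b) = localDir φ x := by
  rcases eq_or_ne (x k) b with rfl | hb
  · rw [update_eq_self]
  set y := update x k b
  have hxy : diffSet x y = {k} := diffSet_update_right hb
  funext i
  rcases eq_or_ne i k with rfl | hik
  · have hyx := diffSet_map_eq_singleton φ ((diffSet_comm y x).trans hxy)
    rw [diffSet_comm, diffSet_map_eq_singleton φ hxy] at hyx
    exact (singleton_injective hyx).symm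
  obtain ⟨a, ha⟩ := exists_ne (x i)
  set x' := update x i a
  set y' := update y i a
  have hyi : y i = x i := update_of_ne hik b x
  have hxx' : diffSet x x' = {i} := diffSet_update_right ha.symm
  have hyy' : diffSet y y' = {i} := diffSet_update_right (hyi ▸ ha.symm)
  have hx'y' : diffSet x' y' = {k} := by
    rw [show y' = update x' k b from update_comm hik.symm b a x]
    have hx'k : x' k = x k := update_of_ne hik.symm a x
    exact diffSet_update_right (hx'k ▸ hb)
  have hxy' : 1 < hammingDist (φ x) (φ y') := by
    rw [← not_le, hammingDist_map_le_one_iff, ← card_diffSet, diffSet_eq_pair hxy hyy' hik.symm,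
      card_pair hik.symm]
    omega
  have hvia_y := diffSet_eq_pair_of_one_lt_hammingDist (diffSet_map_eq_singleton φ hxy)
    (diffSet_map_eq_singleton φ hyy') hxy'
  have hvia_x' := diffSet_eq_pair_of_one_lt_hammingDist (diffSet_map_eq_singleton φ hxx')
    (diffSet_map_eq_singleton φ hx'y') hxy'
  have hmem : localDir φ x i ∈ ({localDir φ x k, localDir φ y i} : Finset (Fin n)) := by
    rw [← hvia_y, hvia_x']
    exact mem_insert_self _ _
  rcases mem_insert.1 hmem with h | h
  · exact absurd (localDir_injective φ x h) hik
  · exact (mem_singleton.1 h).symm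

lemma localDir_eq (x y : Fin n → Fin m) : localDir φ x = localDir φ y :=
  apply_eq_apply_of_diffSet_subset (localDir φ) univ (fun x k _ b => localDir_update φ x k b)
    (subset_univ _)

lemma map_apply_localDir_eq (z : Fin n → Fin m) (h : x i = y i) :
    φ x (localDir φ z i) = φ y (localDir φ z i) := by
  refine apply_eq_apply_of_diffSet_subset (fun w => φ w (localDir φ z i)) {i}ᶜ ?_ ?_
  · intro w k hk a
    rcases eq_or_ne (w k) a with rfl | ha
    · rw [update_eq_self]
    have hki : localDir φ z i ≠ localDir φ z k :=
      (localDir_injective φ z).ne (Ne.symm (by simpa using hk))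
    have hD := diffSet_map_update φ ha
    rw [localDir_eq φ w z] at hD
    exact (apply_eq_of_diffSet_eq_singleton hD hki).symm
  · intro j hj
    rw [mem_compl, mem_singleton]
    rintro rfl
    exact mem_diffSet.1 hj h

end Automorphism

lemma wreathToAut_surjective [Nontrivial (Fin m)] : Surjective (wreathToAut n m) := by
  intro φ
  obtain ⟨z⟩ : Nonempty (Fin n → Fin m) := inferInstance
  set τ := localDir φ z
  have hcoord : ∀ i, Injective fun a => φ (update z i a) (τ i) := by
    intro i a b hab
    by_contra hne
    have hD := diffSet_map_eq_singleton φ (diffSet_update_update (x := z) (i := i) hne)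
    rw [localDir_eq φ _ z] at hD
    exact apply_ne_of_diffSet_eq_singleton hD hab
  let σ : Perm (Fin n) :=
    ofBijective τ (Finite.injective_iff_bijective.1 (localDir_injective φ z))
  let g : Fin n → Perm (Fin m) := fun j =>
    ofBijective _ (Finite.injective_iff_bijective.1 (hcoord (σ.symm j)))
  refine ⟨⟨g, σ⟩, RelIso.ext fun x => funext fun j => ?_⟩
  obtain ⟨i, rfl⟩ := σ.surjective j
  change φ (update z (σ.symm (σ i)) (x (σ.symm (σ i)))) (τ (σ.symm (σ i))) = φ x (τ i)
  rw [symm_apply_apply]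
  exact map_apply_localDir_eq φ z (update_self i (x i) z)

end HammingGraph

theorem hammingGraph_aut_iso_wreath_general (n m : ℕ) (hm : 3 ≤ m) :
    Nonempty ((hammingGraph n m ≃g hammingGraph n m) ≃*
      ((Fin n → Equiv.Perm (Fin m)) ⋊[permuteCoords] Equiv.Perm (Fin n))) := by
  have : Nontrivial (Fin m) := Fin.nontrivial_iff_two_le.2 (by omega)
  exact ⟨(MulEquiv.ofBijective (HammingGraph.wreathToAut n m)
    ⟨HammingGraph.wreathToAut_injective, HammingGraph.wreathToAut_surjective⟩).symm⟩

/-- For `n ≥ 2` and `m ≥ 3`, `Aut(H(n,m))` is isomorphic to the wreath product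
`Sym(Fin m) wr Sym(Fin n) = (Sym(Fin m))^n ⋊ Sym(Fin n)`. -/
theorem hammingGraph_aut_iso_wreath (n m : ℕ) (hn : 2 ≤ n) (hm : 3 ≤ m) :
    Nonempty ((hammingGraph n m ≃g hammingGraph n m) ≃*
      ((Fin n → Equiv.Perm (Fin m)) ⋊[permuteCoords] Equiv.Perm (Fin n))) :=
  hammingGraph_aut_iso_wreath_general n m hm
end
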